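/- Let T_n = R_1 + ... + R_n where R_1, R_2, ... are i.i.d. ℕ-valued random variables with P(R_k = m) = c(φ,m) for a Bernstein function φ as above with φ(1) = 1. Then for all t ≥ 0 and n ∈ ℕ, E[e^{-t T_n}] ≤ e^{-n φ(t)}. -/

import Mathlib

open MeasureTheory Set ProbabilityTheory

/-!
With `s = e^{-t}`, the generating function `∑ c(φ, m) sᵐ` is summed under the integral sign
(it is the exponential series of `s y`, minus its constant term), which gives
`E[e^{-t R_k}] = 1 - φ(u)` with `u = 1 - e^{-t}`; by independence
`E[e^{-t T_n}] = (1 - φ(u))ⁿ`, so it remains to show `1 - φ(u) ≤ e^{-φ(t)}`.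
Concavity of `x ↦ 1 - e^{-x y}` gives `v φ(x) ≤ φ(v x)` for `v ∈ [0, 1]`, hence `φ(u) ≥ u φ(1) = u`
and `φ(t) ≤ (t / u) φ(u)` since `u ≤ t`. As `q ↦ -log(1 - q) / q` is increasing and
`t = -log(1 - u)`, we get `-log(1 - φ(u)) ≥ (t / u) φ(u) ≥ φ(t)`.
-/

namespace Real

lemma one_sub_exp_neg_le_min (z : ℝ) : 1 - exp (-z) ≤ min 1 z :=
  le_min (by linarith [exp_pos (-z)]) (by linarith [add_one_le_exp (-z)])

lemma min_one_mul_le {x y : ℝ} (hx : 0 ≤ x) (hy : 0 ≤ y) :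
    min 1 (x * y) ≤ (1 + x) * min 1 y := by
  rcases le_total y 1 with h | h
  · rw [min_eq_right h]; nlinarith [min_le_right 1 (x * y)]
  · rw [min_eq_left h]; linarith [min_le_left 1 (x * y)]

lemma mul_one_sub_exp_neg_le {u y : ℝ} (hu0 : 0 ≤ u) (hu1 : u ≤ 1) :
    u * (1 - exp (-y)) ≤ 1 - exp (-(u * y)) := by
  have h := convexOn_exp.2 (mem_univ (-y)) (mem_univ 0) hu0 (sub_nonneg.2 hu1) (by ring)
  simp only [smul_eq_mul, mul_zero, add_zero, exp_zero, mul_one, mul_neg] at h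
  linarith

lemma mul_neg_log_one_sub_le {u q : ℝ} (hu : 0 < u) (huq : u ≤ q) (hq : q < 1) :
    q * -log (1 - u) ≤ u * -log (1 - q) := by
  have hq0 : 0 < q := hu.trans_le huq
  have h := strictConcaveOn_log_Ioi.concaveOn.2 (mem_Ioi.2 (sub_pos.2 hq)) (mem_Ioi.2 one_pos)
    (div_nonneg hu.le hq0.le) (sub_nonneg.2 ((div_le_one hq0).2 huq)) (by ring)
  simp only [smul_eq_mul, log_one, mul_zero, add_zero, mul_one] at h
  rw [show u / q * (1 - q) + (1 - u / q) = 1 - u by field_simp; ring, div_mul_eq_mul_div,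
    div_le_iff₀ hq0] at h
  linarith

end Real

open Real

lemma one_sub_apply_one_sub_exp_neg_le {φ : ℝ → ℝ} (hφ0 : φ 0 = 0) (hφ1 : φ 1 = 1)
    (hφ : ∀ x, 0 ≤ x → ∀ u ∈ Icc (0 : ℝ) 1, u * φ x ≤ φ (u * x)) {t : ℝ} (ht : 0 ≤ t) :
    1 - φ (1 - exp (-t)) ≤ exp (-φ t) := by
  rcases ht.eq_or_lt with rfl | ht
  · simp [hφ0]
  set u := 1 - exp (-t)
  have hu0 : 0 < u := sub_pos.2 (exp_lt_one_iff.2 (neg_lt_zero.2 ht))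
  have hut : u ≤ t := (one_sub_exp_neg_le_min t).trans (min_le_right _ _)
  have hu1 : u < 1 := by linarith [exp_pos (-t)]
  have huφ : u ≤ φ u := by simpa [hφ1] using hφ 1 zero_le_one u ⟨hu0.le, hu1.le⟩
  rcases lt_or_ge (φ u) 1 with hφu | hφu
  swap
  · linarith [exp_pos (-φ t)]
  have hchord : u * φ t ≤ t * φ u := by
    have h := hφ t ht.le (u / t) ⟨by positivity, (div_le_one ht).2 hut⟩
    rw [div_mul_cancel₀ _ ht.ne', div_mul_eq_mul_div, div_le_iff₀ ht] at h
    linarith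
  have hslope : φ u * t ≤ u * -log (1 - φ u) := by
    simpa [u] using mul_neg_log_one_sub_le hu0 huφ hφu
  have hφt : φ t ≤ -log (1 - φ u) := le_of_mul_le_mul_left (by linarith) hu0
  calc 1 - φ u = exp (log (1 - φ u)) := (exp_log (by linarith)).symm
    _ ≤ exp (-φ t) := exp_le_exp.2 (by linarith)

lemma integral_comp_eq_tsum_measureReal {Ω : Type*} [MeasurableSpace Ω] {μ : Measure Ω}
    {X : Ω → ℕ} (hX : Measurable X) {f : ℕ → ℝ} (hf : Integrable f (μ.map X)) :
    ∫ ω, f (X ω) ∂μ = ∑' m, μ.real {ω | X ω = m} * f m := by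
  rw [← integral_map hX.aemeasurable hf.aestronglyMeasurable, integral_countable hf]
  congr 1 with m
  rw [smul_eq_mul, map_measureReal_apply hX (measurableSet_singleton m)]
  rfl

noncomputable def bernsteinFun (b : ℝ) (ν : Measure ℝ) (x : ℝ) : ℝ :=
  b * x + ∫ y in Ioi 0, (1 - exp (-x * y)) ∂ν

noncomputable def bernsteinCoeff (b : ℝ) (ν : Measure ℝ) (m : ℕ) : ℝ :=
  1 / (Nat.factorial m : ℝ) * ∫ y in Ioi 0, y ^ m * exp (-y) ∂ν + if m = 1 then b else 0

section Bernstein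

variable {b : ℝ} {ν : Measure ℝ}

@[simp]
lemma bernsteinFun_zero : bernsteinFun b ν 0 = 0 := by
  simp [bernsteinFun]

lemma bernsteinCoeff_nonneg (hb : 0 ≤ b) (m : ℕ) : 0 ≤ bernsteinCoeff b ν m := by
  refine add_nonneg (mul_nonneg (by positivity) ?_) (by split_ifs <;> simp [hb])
  exact setIntegral_nonneg measurableSet_Ioi fun y (hy : 0 < y) => by positivity

lemma integrableOn_min_one (hν : ∫⁻ y in Ioi (0 : ℝ), ENNReal.ofReal (min 1 y) ∂ν ≠ ⊤) :
    IntegrableOn (fun y => min 1 y) (Ioi 0) ν :=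
  ⟨by fun_prop, (hasFiniteIntegral_iff_ofReal
    ((ae_restrict_iff' measurableSet_Ioi).2 (ae_of_all _ fun y (hy : 0 < y) =>
      le_min zero_le_one hy.le))).2 hν.lt_top⟩

lemma integrableOn_one_sub_exp_neg_mul
    (hν : ∫⁻ y in Ioi (0 : ℝ), ENNReal.ofReal (min 1 y) ∂ν ≠ ⊤) {x : ℝ} (hx : 0 ≤ x) :
    IntegrableOn (fun y => 1 - exp (-x * y)) (Ioi 0) ν := by
  refine ((integrableOn_min_one hν).const_mul (1 + x)).mono' (by fun_prop)
    ((ae_restrict_iff' measurableSet_Ioi).2 (ae_of_all _ fun y (hy : 0 < y) => ?_))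
  have hxy : 0 ≤ x * y := by positivity
  rw [norm_of_nonneg (sub_nonneg.2 (exp_le_one_iff.2 (by linarith))), neg_mul]
  exact (one_sub_exp_neg_le_min (x * y)).trans (min_one_mul_le hx hy.le)

lemma mul_bernsteinFun_le (hν : ∫⁻ y in Ioi (0 : ℝ), ENNReal.ofReal (min 1 y) ∂ν ≠ ⊤)
    {x : ℝ} (hx : 0 ≤ x) {u : ℝ} (hu : u ∈ Icc (0 : ℝ) 1) :
    u * bernsteinFun b ν x ≤ bernsteinFun b ν (u * x) := by
  have hint : u * ∫ y in Ioi 0, (1 - exp (-x * y)) ∂ν ≤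
      ∫ y in Ioi 0, (1 - exp (-(u * x) * y)) ∂ν := by
    rw [← integral_const_mul]
    refine setIntegral_mono_on ((integrableOn_one_sub_exp_neg_mul hν hx).const_mul u)
      (integrableOn_one_sub_exp_neg_mul hν (mul_nonneg hu.1 hx)) measurableSet_Ioi fun y _ => ?_
    simpa [neg_mul, mul_assoc] using mul_one_sub_exp_neg_le (y := x * y) hu.1 hu.2
  simp only [bernsteinFun]
  linarith

lemma integrableOn_exp_neg_mul_sub_exp_neg
    (hν : ∫⁻ y in Ioi (0 : ℝ), ENNReal.ofReal (min 1 y) ∂ν ≠ ⊤) {u : ℝ} (hu : 0 ≤ u) :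
    IntegrableOn (fun y => exp (-u * y) - exp (-y)) (Ioi 0) ν :=
  ((integrableOn_one_sub_exp_neg_mul hν zero_le_one).sub
    (integrableOn_one_sub_exp_neg_mul hν hu)).congr_fun (fun y _ => by simp) measurableSet_Ioi

lemma bernsteinFun_one_sub_bernsteinFun
    (hν : ∫⁻ y in Ioi (0 : ℝ), ENNReal.ofReal (min 1 y) ∂ν ≠ ⊤) {s : ℝ} (hs : s ≤ 1) :
    bernsteinFun b ν 1 - bernsteinFun b ν (1 - s) =
      b * s + ∫ y in Ioi 0, (exp (-(1 - s) * y) - exp (-y)) ∂ν := by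
  have h := integral_sub (integrableOn_one_sub_exp_neg_mul hν zero_le_one)
    (integrableOn_one_sub_exp_neg_mul hν (sub_nonneg.2 hs))
  simp only [sub_sub_sub_cancel_left, neg_mul, one_mul] at h
  simp only [bernsteinFun, h, neg_mul, one_mul]
  ring

lemma hasSum_integral_pow_mul_exp_neg
    (hν : ∫⁻ y in Ioi (0 : ℝ), ENNReal.ofReal (min 1 y) ∂ν ≠ ⊤) {s : ℝ} (hs0 : 0 ≤ s)
    (hs1 : s ≤ 1) :
    HasSum (fun m : ℕ => s ^ (m + 1) / (Nat.factorial (m + 1) : ℝ) *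
        ∫ y in Ioi 0, y ^ (m + 1) * exp (-y) ∂ν)
      (∫ y in Ioi 0, (exp (-(1 - s) * y) - exp (-y)) ∂ν) := by
  set F : ℕ → ℝ → ℝ := fun m y => (s * y) ^ (m + 1) / (Nat.factorial (m + 1) : ℝ) * exp (-y)
  have hF : ∀ y, HasSum (fun m => F m y) (exp (-(1 - s) * y) - exp (-y)) := by
    intro y
    have h := ((hasSum_nat_add_iff' 1).2
      (NormedSpace.expSeries_div_hasSum_exp (s * y))).mul_right (exp (-y))
    rw [← exp_eq_exp_ℝ, Finset.sum_range_one, pow_zero, Nat.factorial_zero, Nat.cast_one, div_one,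
      sub_mul, one_mul, ← exp_add, show s * y + -y = -(1 - s) * y by ring] at h
    exact h
  have hFnn : ∀ m, ∀ y ∈ Ioi (0 : ℝ), 0 ≤ F m y := fun m y (hy : 0 < y) => by positivity
  have hFint : ∀ m, ∫ y in Ioi 0, F m y ∂ν =
      s ^ (m + 1) / (Nat.factorial (m + 1) : ℝ) * ∫ y in Ioi 0, y ^ (m + 1) * exp (-y) ∂ν := by
    intro m
    rw [← integral_const_mul]
    simp only [F, mul_pow]
    congr 1 with y
    ring
  simpa only [hFint] using hasSum_integral_of_dominated_convergence F (fun m => by fun_prop)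
    (fun m => (ae_restrict_iff' measurableSet_Ioi).2
      (ae_of_all _ fun y hy => (norm_of_nonneg (hFnn m y hy)).le))
    (ae_of_all _ fun y => (hF y).summable)
    ((integrableOn_exp_neg_mul_sub_exp_neg hν (sub_nonneg.2 hs1)).congr
      (ae_of_all _ fun y => (hF y).tsum_eq.symm))
    (ae_of_all _ hF)

lemma hasSum_bernsteinCoeff_mul_pow
    (hν : ∫⁻ y in Ioi (0 : ℝ), ENNReal.ofReal (min 1 y) ∂ν ≠ ⊤) {s : ℝ} (hs0 : 0 ≤ s)
    (hs1 : s ≤ 1) :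
    HasSum (fun m : ℕ => bernsteinCoeff b ν (m + 1) * s ^ (m + 1))
      (bernsteinFun b ν 1 - bernsteinFun b ν (1 - s)) := by
  rw [bernsteinFun_one_sub_bernsteinFun hν hs1, add_comm]
  convert (hasSum_integral_pow_mul_exp_neg hν hs0 hs1).add (hasSum_ite_eq 0 (b * s)) using 1
  funext m
  rcases m with _ | m <;> simp [bernsteinCoeff] <;> ring

lemma integral_exp_neg_mul_eq_bernsteinFun (hb : 0 ≤ b)
    (hν : ∫⁻ y in Ioi (0 : ℝ), ENNReal.ofReal (min 1 y) ∂ν ≠ ⊤)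
    {Ω : Type*} [MeasurableSpace Ω] {μ : Measure Ω} [IsProbabilityMeasure μ]
    {X : Ω → ℕ} (hX : Measurable X) (hX0 : ∀ ω, 1 ≤ X ω)
    (hlaw : ∀ m, 1 ≤ m → μ {ω | X ω = m} = ENNReal.ofReal (bernsteinCoeff b ν m))
    {t : ℝ} (ht : 0 ≤ t) :
    ∫ ω, exp (-t * X ω) ∂μ = bernsteinFun b ν 1 - bernsteinFun b ν (1 - exp (-t)) := by
  have hs0 : 0 ≤ exp (-t) := (exp_pos _).le
  have hs1 : exp (-t) ≤ 1 := exp_le_one_iff.2 (by linarith)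
  have hpow : ∀ m : ℕ, exp (-t * m) = exp (-t) ^ m := fun m => by rw [mul_comm, exp_nat_mul]
  have hint : Integrable (fun m : ℕ => exp (-t * m)) (μ.map X) :=
    .of_bound (by fun_prop) 1 (ae_of_all _ fun m => by
      rw [norm_of_nonneg (exp_pos _).le, hpow]
      exact pow_le_one₀ hs0 hs1)
  have hzero : μ.real {ω | X ω = 0} = 0 := by
    simp [measureReal_def, fun ω => Nat.one_le_iff_ne_zero.1 (hX0 ω)]
  have hXsucc : ∀ m : ℕ, μ.real {ω | X ω = m + 1} * exp (-t * (m + 1 : ℕ)) =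
      bernsteinCoeff b ν (m + 1) * exp (-t) ^ (m + 1) := fun m => by
    rw [measureReal_def, hlaw _ m.succ_pos, ENNReal.toReal_ofReal (bernsteinCoeff_nonneg hb _),
      hpow]
  rw [integral_comp_eq_tsum_measureReal hX hint]
  refine HasSum.tsum_eq ((hasSum_nat_add_iff' 1).1 ?_)
  rw [Finset.sum_range_one, hzero, zero_mul, sub_zero]
  simpa only [hXsucc] using hasSum_bernsteinCoeff_mul_pow hν hs0 hs1

end Bernstein

theorem laplace_transform_Tn (b : ℝ) (hb : 0 ≤ b) (ν : Measure ℝ)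
    (hν : ∫⁻ y in Ioi (0:ℝ), ENNReal.ofReal (min 1 y) ∂ν ≠ ⊤)
    (φ : ℝ → ℝ)
    (hφ : ∀ x : ℝ, 0 ≤ x → φ x = b * x + ∫ y in Ioi (0:ℝ), (1 - Real.exp (-x * y)) ∂ν)
    (hφ1 : φ 1 = 1)
    (c : ℕ → ℝ)
    (hc : ∀ m : ℕ, 1 ≤ m → c m =
      (1 / (Nat.factorial m : ℝ)) * ∫ y in Ioi (0:ℝ), y ^ m * Real.exp (-y) ∂ν
        + if m = 1 then b else 0)
    {Ω : Type*} [MeasurableSpace Ω] (μ : Measure Ω) [IsProbabilityMeasure μ]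
    (R : ℕ → Ω → ℕ) (hR : ∀ k, Measurable (R k))
    (hRindep : iIndepFun R μ)
    (hRpos : ∀ k ω, 1 ≤ R k ω)
    (hRlaw : ∀ k, ∀ m : ℕ, 1 ≤ m → μ {ω | R k ω = m} = ENNReal.ofReal (c m))
    (T : ℕ → Ω → ℕ) (hT : ∀ n ω, T n ω = ∑ k ∈ Finset.range n, R k ω) :
    ∀ t : ℝ, 0 ≤ t → ∀ n : ℕ,
      ∫ ω, Real.exp (-t * (T n ω : ℝ)) ∂μ ≤ Real.exp (-(n : ℝ) * φ t) := by
  have hφ' : ∀ x, 0 ≤ x → φ x = bernsteinFun b ν x := hφ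
  have hlaw : ∀ k m, 1 ≤ m → μ {ω | R k ω = m} = ENNReal.ofReal (bernsteinCoeff b ν m) :=
    fun k m hm => by rw [hRlaw k m hm, hc m hm]; rfl
  have hindep : iIndepFun (fun k ω => (R k ω : ℝ)) μ :=
    hRindep.comp (fun _ m => (m : ℝ)) fun _ => measurable_from_top
  intro t ht n
  have hmgf : ∀ k, mgf (fun ω => (R k ω : ℝ)) μ (-t) = 1 - φ (1 - exp (-t)) := fun k => by
    rw [mgf, integral_exp_neg_mul_eq_bernsteinFun hb hν (hR k) (hRpos k) (hlaw k) ht,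
      ← hφ' 1 zero_le_one, hφ1, ← hφ' _ (sub_nonneg.2 (exp_le_one_iff.2 (by linarith)))]
  have hTn : ∫ ω, exp (-t * T n ω) ∂μ =
      mgf (∑ k ∈ Finset.range n, fun ω => (R k ω : ℝ)) μ (-t) := by
    simp only [mgf, hT, Finset.sum_apply, Nat.cast_sum]
  have hbound : 1 - φ (1 - exp (-t)) ≤ exp (-φ t) :=
    one_sub_apply_one_sub_exp_neg_le ((hφ' 0 le_rfl).trans bernsteinFun_zero) hφ1
      (fun x hx u hu => by
        rw [hφ' x hx, hφ' _ (mul_nonneg hu.1 hx)]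
        exact mul_bernsteinFun_le hν hx hu) ht
  rw [hTn, hindep.mgf_sum (fun k => measurable_from_top.comp (hR k)),
    Finset.prod_congr rfl fun k _ => hmgf k, Finset.prod_const, Finset.card_range]
  calc (1 - φ (1 - exp (-t))) ^ n ≤ exp (-φ t) ^ n :=
        pow_le_pow_left₀ (hmgf 0 ▸ mgf_nonneg) hbound n
    _ = exp (-n * φ t) := by rw [← exp_nat_mul]; ring_nf
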